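/- arXiv:2407.13959 — 5 statements merged into one kernel-verified Lean document; each statement's English description precedes it below -/
import Mathlib

section
/- If Γ₁,...,Γ_d are cycle-free (acyclic) subgraphs of the complete graph K_n whose edge sets partition the edge set of K_n, then d ≥ ⌊(n+1)/2⌋. -/
/-!
A forest on `n ≥ 1` vertices has at most `n - 1` edges: extend it to a spanning tree of `K_n`.
Covering the `n(n-1)/2` edges of `K_n` by `d` forests therefore forces `n(n-1)/2 ≤ d(n-1)`,
that is `n ≤ 2d` once `n ≥ 2`.
-/

open SimpleGraph

/-- A cycle-free `d`-partition of the complete graph on `Fin n`: each unordered pair of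
distinct vertices is an edge of exactly one component, and every component is acyclic. -/
def IsCFP {n d : ℕ} (Γ : Fin d → SimpleGraph (Fin n)) : Prop :=
  (∀ u v : Fin n, u ≠ v → ∃! i, (Γ i).Adj u v) ∧ ∀ i, (Γ i).IsAcyclic

/-- `(u,v)` is the same unordered pair as `(a,b)`. -/
def SamePair {n : ℕ} (u v a b : Fin n) : Prop := (u = a ∧ v = b) ∨ (u = b ∧ v = a)

/-- The partitions `P` and `Q` differ on the edge `(u,v)`. -/
def Differs {n d : ℕ} (P Q : Fin d → SimpleGraph (Fin n)) (u v : Fin n) : Prop :=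
  ∃ i, ¬ ((Q i).Adj u v ↔ (P i).Adj u v)

/-- `Q` agrees with `P` on every edge except the edges `(x,y)`, `(x,z)`, `(y,z)`,
and differs from `P` on at least two of those three edges. -/
def FlipCond {n d : ℕ} (x y z : Fin n) (P Q : Fin d → SimpleGraph (Fin n)) : Prop :=
  (∀ u v : Fin n, ¬ SamePair u v x y → ¬ SamePair u v x z → ¬ SamePair u v y z →
      ∀ i, ((Q i).Adj u v ↔ (P i).Adj u v)) ∧
  ((Differs P Q x y ∧ Differs P Q x z) ∨ (Differs P Q x y ∧ Differs P Q y z) ∨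
    (Differs P Q x z ∧ Differs P Q y z))

/-- One involution move between cycle-free partitions. -/
def Step {n d : ℕ} (P Q : Fin d → SimpleGraph (Fin n)) : Prop :=
  IsCFP P ∧ IsCFP Q ∧ ∃ x y z : Fin n, x ≠ y ∧ x ≠ z ∧ y ≠ z ∧ FlipCond x y z P Q

/-- Involution equivalence: a finite sequence of involution moves. -/
def InvEquiv {n d : ℕ} : (Fin d → SimpleGraph (Fin n)) → (Fin d → SimpleGraph (Fin n)) → Prop :=
  Relation.ReflTransGen Step

/-- The graph `Ω_t^{(d)}` on vertices `{1,…,2d}` (vertex `v : Fin (2d)` has label `v+1`):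
the edge `(i,j)`, `i<j`, belongs to `Ω_t` iff `i+j` is even and `i ∈ {2t-1,2t}`,
or `i+j` is odd and `j ∈ {2t-1,2t}`. -/
def Omega (d t : ℕ) : SimpleGraph (Fin (2*d)) :=
  SimpleGraph.fromRel (fun u v =>
    u.1 < v.1 ∧
    (((u.1 + v.1) % 2 = 0 ∧ (u.1 + 1 = 2*t - 1 ∨ u.1 + 1 = 2*t)) ∨
     ((u.1 + v.1) % 2 = 1 ∧ (v.1 + 1 = 2*t - 1 ∨ v.1 + 1 = 2*t))))

/-- The standard twin-star cycle-free `d`-partition `E_d = (Ω₁,…,Ω_d)`. -/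
def Ed (d : ℕ) : Fin d → SimpleGraph (Fin (2*d)) := fun t => Omega d (t.1 + 1)

/-- The twin-star graph `TS_d` with `2d` vertices: centers `0` and `1` are adjacent,
center `0` is adjacent to the `d-1` leaves `2,…,d`, and center `1` to the leaves
`d+1,…,2d-1`. -/
def TwinStar (d : ℕ) : SimpleGraph (Fin (2*d)) :=
  SimpleGraph.fromRel (fun u v =>
    (u.1 = 0 ∧ 1 ≤ v.1 ∧ v.1 ≤ d) ∨ (u.1 = 1 ∧ d + 1 ≤ v.1))

/-- The action of `(σ, τ) ∈ S_{2d} × S_d` on a `d`-partition: `σ` relabels vertices and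
`τ` permutes the order of the components. -/
def actP {n d : ℕ} (σ : Equiv.Perm (Fin n)) (τ : Equiv.Perm (Fin d))
    (P : Fin d → SimpleGraph (Fin n)) : Fin d → SimpleGraph (Fin n) :=
  fun i => (P (τ⁻¹ i)).map σ.toEmbedding

/-- One step of weak equivalence: `P = (σ,τ) · (an involution move applied to Q)`. -/
def WStep {n d : ℕ} (P Q : Fin d → SimpleGraph (Fin n)) : Prop :=
  ∃ (σ : Equiv.Perm (Fin n)) (τ : Equiv.Perm (Fin d)) (R : Fin d → SimpleGraph (Fin n)),
    Step Q R ∧ P = actP σ τ R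

/-- Weak equivalence of cycle-free `d`-partitions. -/
def WeakEquiv {n d : ℕ} : (Fin d → SimpleGraph (Fin n)) → (Fin d → SimpleGraph (Fin n)) → Prop :=
  Relation.ReflTransGen WStep

namespace SimpleGraph

open Finset

variable {V : Type*} [Fintype V]

theorem IsAcyclic.card_edgeFinset_add_one_le [Nonempty V] {G : SimpleGraph V}
    [Fintype G.edgeSet] (hG : G.IsAcyclic) : #G.edgeFinset + 1 ≤ Fintype.card V := by
  classical
  obtain ⟨T, hGT, -, hT⟩ := connected_top.exists_isTree_le_of_le_of_isAcyclic le_top hG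
  rw [← hT.card_edgeFinset]
  gcongr

theorem card_choose_two_le_sum_card_edgeFinset {ι : Type*} [Fintype ι]
    (Γ : ι → SimpleGraph V) [∀ i, Fintype (Γ i).edgeSet]
    (hcover : ∀ u v, u ≠ v → ∃ i, (Γ i).Adj u v) :
    (Fintype.card V).choose 2 ≤ ∑ i, #(Γ i).edgeFinset := by
  classical
  rw [← card_edgeFinset_top_eq_card_choose_two]
  calc #(⊤ : SimpleGraph V).edgeFinset ≤ #(univ.biUnion fun i ↦ (Γ i).edgeFinset) := by
        refine card_le_card fun e he ↦ ?_
        induction e with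
        | _ u v =>
          obtain ⟨i, hi⟩ := hcover u v (by simpa using he)
          exact mem_biUnion.2 ⟨i, mem_univ i, by simpa using hi⟩
    _ ≤ ∑ i, #(Γ i).edgeFinset := card_biUnion_le

theorem card_le_two_mul_card_of_isAcyclic_cover {ι : Type*} [Fintype ι]
    (hV : 2 ≤ Fintype.card V) (Γ : ι → SimpleGraph V)
    (hcover : ∀ u v, u ≠ v → ∃ i, (Γ i).Adj u v) (hacyc : ∀ i, (Γ i).IsAcyclic) :
    Fintype.card V ≤ 2 * Fintype.card ι := by
  classical
  have : Nonempty V := Fintype.card_pos_iff.1 (by omega)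
  set N := Fintype.card V
  have hsum : N.choose 2 ≤ Fintype.card ι * (N - 1) := calc
    N.choose 2 ≤ ∑ i, #(Γ i).edgeFinset := card_choose_two_le_sum_card_edgeFinset Γ hcover
    _ ≤ ∑ _i : ι, (N - 1) := sum_le_sum fun i _ ↦ by
        have := (hacyc i).card_edgeFinset_add_one_le; omega
    _ = Fintype.card ι * (N - 1) := by simp
  refine Nat.le_of_mul_le_mul_right (c := N - 1) ?_ (by omega)
  calc N * (N - 1) = N.choose 2 * 2 := by
        rw [Nat.choose_two_right, Nat.div_two_mul_two_of_even N.even_mul_pred_self]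
    _ ≤ Fintype.card ι * (N - 1) * 2 := Nat.mul_le_mul_right 2 hsum
    _ = 2 * Fintype.card ι * (N - 1) := by ring

end SimpleGraph

/-- If the edge sets of acyclic subgraphs `Γ₁, …, Γ_d` partition the edge set of `K_n`,
then `d ≥ ⌊(n+1)/2⌋`. -/
theorem cycleFree_partition_lower_bound (n d : ℕ) (hd : 1 ≤ d)
    (Γ : Fin d → SimpleGraph (Fin n))
    (hpart : ∀ u v : Fin n, u ≠ v → ∃! i, (Γ i).Adj u v)
    (hacyc : ∀ i, (Γ i).IsAcyclic) : (n + 1) / 2 ≤ d := by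
  rcases Nat.lt_or_ge n 2 with hn | hn
  · omega
  have := card_le_two_mul_card_of_isAcyclic_cover (by simpa using hn) Γ
    (fun u v huv ↦ (hpart u v huv).exists) hacyc
  simp only [Fintype.card_fin] at this
  omega
end

section
/- For each d ≥ 1, the set of cycle-free d-partitions of K_{2d} is nonempty: the tuple E_d = (Ω₁^{(d)},...,Ω_d^{(d)}) is a cycle-free d-partition of K_{2d}. -/
open SimpleGraph

/-! Every edge `{u, v}` of `K_{2d}` lies in exactly one `Ω_t`, namely the one whose pair `S_t`
contains the smaller endpoint when `u + v` is even and the larger one otherwise. Outside its pair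
`S_t`, a vertex `w` of `Ω_t` has at most one neighbour (the parity of `w` fixes which element of
`S_t` it is joined to), so a cycle in `Ω_t`, having at least three vertices, would pass through
such a `w` and leave it along two distinct edges. -/

theorem SimpleGraph.isAcyclic_of_adj_unique_of_ne {V : Type*} {G : SimpleGraph V} (a b : V)
    (h : ∀ w, w ≠ a → w ≠ b → ∀ ⦃x y⦄, G.Adj w x → G.Adj w y → x = y) : G.IsAcyclic := by
  classical
  intro v c hc
  obtain ⟨w, hw, hwa, hwb⟩ : ∃ w ∈ c.support, w ≠ a ∧ w ≠ b := by
    by_contra! hab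
    have hsub : c.support.tail ⊆ [a, b] := fun w hw ↦ by
      by_cases hwa : w = a
      · simp [hwa]
      · simp [hab w (List.mem_of_mem_tail hw) hwa]
    have hlen := (hc.support_nodup.subperm hsub).length_le
    simp only [List.length_tail, Walk.length_support, List.length_cons, List.length_nil] at hlen
    have := hc.three_le_length
    omega
  have hc' : (c.rotate w hw).IsCycle := hc.rotate hw
  exact hc'.snd_ne_penultimate <|
    h w hwa hwb (Walk.adj_snd hc'.not_nil) (Walk.adj_penultimate hc'.not_nil).symm

/-- With `0`-indexed vertices, `S_{t+1}` is `{2t, 2t+1}`; so this is the `0`-indexed `t` such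
that the edge `{u, v}` belongs to `Ω_{t+1}`. -/
def edIndex (u v : ℕ) : ℕ := (if (u + v) % 2 = 0 then min u v else max u v) / 2

theorem Ed_adj_iff {d : ℕ} (i : Fin d) (u v : Fin (2 * d)) :
    (Ed d i).Adj u v ↔ u ≠ v ∧ edIndex u v = i := by
  simp only [Ed, Omega, fromRel_adj, edIndex, ne_eq, Fin.ext_iff]
  split_ifs <;> omega

theorem Ed_existsUnique_adj {d : ℕ} {u v : Fin (2 * d)} (huv : u ≠ v) :
    ∃! i, (Ed d i).Adj u v := by
  have hlt : edIndex u v < d := by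
    unfold edIndex
    split_ifs <;> omega
  refine ⟨⟨edIndex u v, hlt⟩, (Ed_adj_iff _ u v).2 ⟨huv, rfl⟩, fun j hj ↦ ?_⟩
  exact Fin.ext ((Ed_adj_iff j u v).1 hj).2.symm

theorem Ed_adj_unique {d : ℕ} {i : Fin d} {w x y : Fin (2 * d)} (hw : w.1 / 2 ≠ i)
    (hx : (Ed d i).Adj w x) (hy : (Ed d i).Adj w y) : x = y := by
  rw [Ed_adj_iff, edIndex] at hx hy
  ext
  split_ifs at hx hy <;> omega

theorem Ed_isAcyclic {d : ℕ} (i : Fin d) : (Ed d i).IsAcyclic :=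
  isAcyclic_of_adj_unique_of_ne (⟨2 * i, by omega⟩ : Fin (2 * d)) ⟨2 * i + 1, by omega⟩
    fun _ hwa hwb _ _ ↦ Ed_adj_unique (by simp only [ne_eq, Fin.ext_iff] at hwa hwb; omega)

theorem Ed_isCFP_general (d : ℕ) : IsCFP (Ed d) :=
  ⟨fun _ _ ↦ Ed_existsUnique_adj, Ed_isAcyclic⟩

/-- For every `d ≥ 1`, the tuple `E_d = (Ω₁^{(d)}, …, Ω_d^{(d)})` is a cycle-free
`d`-partition of `K_{2d}`; in particular the set of cycle-free `d`-partitions is nonempty. -/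
theorem Ed_isCFP (d : ℕ) (hd : 1 ≤ d) : IsCFP (Ed d) :=
  Ed_isCFP_general d
end

section
/- For any permutation σ of the vertices {1,...,2d}, any permutation τ of {1,...,d}, any cycle-free d-partition (Γ₁,...,Γ_d) of K_{2d}, and any triple x < y < z of vertices, the action of (σ,τ) commutes with the involutions: (σ,τ)·((Γ₁,...,Γ_d)^{(x,y,z)}) = ((σ,τ)·(Γ₁,...,Γ_d))^{(σ(x),σ(y),σ(z))}. -/
open SimpleGraph

lemma actP_adj {n d : ℕ} (σ : Equiv.Perm (Fin n)) (τ : Equiv.Perm (Fin d))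
    (P : Fin d → SimpleGraph (Fin n)) (i : Fin d) (a b : Fin n) :
    (actP σ τ P i).Adj a b ↔ (P (τ⁻¹ i)).Adj (σ⁻¹ a) (σ⁻¹ b) := by
  simp only [actP, SimpleGraph.map_adj, Equiv.toEmbedding_apply]
  constructor
  · rintro ⟨u, v, h, rfl, rfl⟩; simpa using h
  · intro h; exact ⟨σ⁻¹ a, σ⁻¹ b, h, by simp, by simp⟩

lemma isAcyclic_map {n : ℕ} (σ : Equiv.Perm (Fin n)) {G : SimpleGraph (Fin n)}
    (h : G.IsAcyclic) : (G.map σ.toEmbedding).IsAcyclic := by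
  intro v c hc
  have := hc.map (f := (SimpleGraph.Iso.map σ G).symm.toHom)
    ((SimpleGraph.Iso.map σ G).symm.toEquiv.injective)
  exact h _ this

/-- The action of `(σ, τ) ∈ S_{2d} × S_d` commutes with the involutions:
`(σ,τ)·(P^{(x,y,z)}) = ((σ,τ)·P)^{(σ(x),σ(y),σ(z))}`. -/
theorem action_commutes_with_flip (d : ℕ)
    (σ : Equiv.Perm (Fin (2*d))) (τ : Equiv.Perm (Fin d))
    (P Q : Fin d → SimpleGraph (Fin (2*d))) (hP : IsCFP P) (hQ : IsCFP Q)
    (x y z : Fin (2*d)) (hxy : x < y) (hyz : y < z)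
    (h : FlipCond x y z P Q) :
    IsCFP (actP σ τ Q) ∧ FlipCond (σ x) (σ y) (σ z) (actP σ τ P) (actP σ τ Q) := by
  
  constructor
  · constructor
    · intro u v huv
      obtain ⟨i, hi, hiu⟩ := hQ.1 (σ⁻¹ u) (σ⁻¹ v) (fun e => huv (by simpa using congrArg σ e))
      refine ⟨τ i, ?_, ?_⟩
      · simp only [actP_adj]; simpa using hi
      · intro j hj
        simp only [actP_adj] at hj
        have := hiu _ hj
        have : τ (τ⁻¹ j) = τ i := congrArg τ this
        simpa using this
    · intro i
      exact isAcyclic_map σ (hQ.2 (τ⁻¹ i))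
  · constructor
    · intro u v h1 h2 h3 i
      simp only [actP_adj]
      apply h.1
      · rintro (⟨e1, e2⟩ | ⟨e1, e2⟩)
        · exact h1 (Or.inl ⟨by simpa using congrArg σ e1, by simpa using congrArg σ e2⟩)
        · exact h1 (Or.inr ⟨by simpa using congrArg σ e1, by simpa using congrArg σ e2⟩)
      · rintro (⟨e1, e2⟩ | ⟨e1, e2⟩)
        · exact h2 (Or.inl ⟨by simpa using congrArg σ e1, by simpa using congrArg σ e2⟩)
        · exact h2 (Or.inr ⟨by simpa using congrArg σ e1, by simpa using congrArg σ e2⟩)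
      · rintro (⟨e1, e2⟩ | ⟨e1, e2⟩)
        · exact h3 (Or.inl ⟨by simpa using congrArg σ e1, by simpa using congrArg σ e2⟩)
        · exact h3 (Or.inr ⟨by simpa using congrArg σ e1, by simpa using congrArg σ e2⟩)
    · have key : ∀ a b : Fin (2*d), Differs P Q a b →
          Differs (actP σ τ P) (actP σ τ Q) (σ a) (σ b) := by
        rintro a b ⟨i, hi⟩
        exact ⟨τ i, by simp only [actP_adj]; simpa using hi⟩
      rcases h.2 with ⟨h1, h2⟩ | ⟨h1, h2⟩ | ⟨h1, h2⟩
      · exact Or.inl ⟨key _ _ h1, key _ _ h2⟩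
      · exact Or.inr (Or.inl ⟨key _ _ h1, key _ _ h2⟩)
      · exact Or.inr (Or.inr ⟨key _ _ h1, key _ _ h2⟩)
end

section
/- Let (Γ₁,...,Γ_d) be a cycle-free d-partition of K_{2d} with Γ_d = Ω_d^{(d)}. Removing vertices 2d−1 and 2d (and all incident edges) from the partition induces a cycle-free (d−1)-partition (Δ₁,...,Δ_{d−1}) of the complete graph K_{2d−2} on vertices {1,...,2d−2}. -/
open SimpleGraph

/-- If the last component of a cycle-free `d`-partition of `K_{2d}` is `Ω_d^{(d)}`, then
removing the vertices `2d-1` and `2d` (and incident edges) induces a cycle-free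
`(d-1)`-partition of the complete graph `K_{2d-2}`. -/
theorem restriction_is_CFP (d : ℕ) (hd : 1 ≤ d)
    (Γ : Fin d → SimpleGraph (Fin (2*d))) (hΓ : IsCFP Γ)
    (hlast : Γ ⟨d-1, by omega⟩ = Omega d d) :
    IsCFP (fun i : Fin (d-1) =>
      SimpleGraph.comap (Fin.castLE (by omega : 2*d-2 ≤ 2*d))
        (Γ (Fin.castLE (by omega : d-1 ≤ d) i))) := by
  have hd2 : 2*d-2 ≤ 2*d := by omega
  have hd1 : d-1 ≤ d := by omega
  have hOm : ∀ u v : Fin (2*d-2),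
      ¬ (Omega d d).Adj (Fin.castLE hd2 u) (Fin.castLE hd2 v) := by
    intro u v h
    have hu := u.2
    have hv := v.2
    simp only [Omega, fromRel_adj, Fin.castLE] at h
    omega
  constructor
  · intro u v huv
    have huv' : (Fin.castLE hd2 u) ≠ (Fin.castLE hd2 v) := by
      simpa [Fin.ext_iff] using huv
    obtain ⟨i, hi, hiu⟩ := hΓ.1 _ _ huv'
    have hine : i.1 ≠ d - 1 := by
      intro h
      have : i = ⟨d-1, by omega⟩ := Fin.ext h
      rw [this, hlast] at hi
      exact hOm u v hi
    have hilt : i.1 < d - 1 := by have := i.2; omega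
    refine ⟨⟨i.1, hilt⟩, ?_, ?_⟩
    · simpa using (show (Γ (Fin.castLE hd1 ⟨i.1, hilt⟩)).Adj _ _ by
        have : Fin.castLE hd1 ⟨i.1, hilt⟩ = i := Fin.ext rfl
        rw [this]; exact hi)
    · intro j hj
      have := hiu (Fin.castLE hd1 j) hj
      exact Fin.ext (by simpa [Fin.ext_iff] using this)
  · intro i
    intro w c hc
    have hinj : Function.Injective (Fin.castLE hd2) := Fin.castLE_injective _
    let f : (SimpleGraph.comap (Fin.castLE hd2) (Γ (Fin.castLE hd1 i))) →g
        (Γ (Fin.castLE hd1 i)) := ⟨Fin.castLE hd2, fun h => h⟩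
    exact hΓ.2 (Fin.castLE hd1 i) (c.map f) (hc.map hinj)
end

section
/- For d = 2: any two cycle-free 2-partitions of K_4 are involution equivalent; moreover the set of cycle-free 2-partitions of K_4 has exactly 12 elements. -/
open SimpleGraph

/-! A `2`-partition of `K_n` is a graph `G` together with its complement, so a cycle-free
`2`-partition of `K_4` is a graph `G` on four vertices such that `G` and `Gᶜ` are forests. Encoding
`G` by its six edge indicators, a finite check shows that these are exactly the `12` Hamiltonian
paths of `K_4`, and that they can be listed so that consecutive ones differ by an involution move.
Involution moves are symmetric, so this chain connects any two of them. -/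

instance {n : ℕ} (u v a b : Fin n) : Decidable (SamePair u v a b) := by
  unfold SamePair; infer_instance

instance {n d : ℕ} (x y z : Fin n) (P Q : Fin d → SimpleGraph (Fin n))
    [∀ i, DecidableRel (P i).Adj] [∀ i, DecidableRel (Q i).Adj] :
    Decidable (FlipCond x y z P Q) := by
  unfold FlipCond Differs; infer_instance

namespace SimpleGraph

instance decidableIsAcyclic {V : Type*} [Fintype V] [DecidableEq V] (G : SimpleGraph V)
    [DecidableRel G.Adj] : Decidable G.IsAcyclic :=
  decidable_of_iff (∀ v w, G.Adj v w → ¬ (G.deleteEdges {s(v, w)}).Reachable v w)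
    (by simp only [isAcyclic_iff_forall_adj_isBridge, isBridge_iff])

end SimpleGraph

theorem List.IsChain.reflTransGen_of_mem {α : Type*} {r : α → α → Prop} [Std.Symm r]
    {l : List α} (hl : l.IsChain r) {a b : α} (ha : a ∈ l) (hb : b ∈ l) :
    Relation.ReflTransGen r a b := by
  have hhead : ∀ c ∈ l, Relation.ReflTransGen r (l.head (ne_nil_of_mem ha)) c :=
    hl.induction _ _ (fun _ _ hxy hx => hx.tail hxy) (fun _ => .refl)
  exact (Std.Symm.symm _ _ (hhead a ha)).trans (hhead b hb)

section Involution

variable {n d : ℕ} {P Q : Fin d → SimpleGraph (Fin n)}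

theorem Differs.symm {u v : Fin n} (h : Differs P Q u v) : Differs Q P u v :=
  let ⟨i, hi⟩ := h; ⟨i, fun h' => hi h'.symm⟩

theorem FlipCond.symm {x y z : Fin n} (h : FlipCond x y z P Q) : FlipCond x y z Q P := by
  obtain ⟨hout, hin⟩ := h
  refine ⟨fun u v h₁ h₂ h₃ i => (hout u v h₁ h₂ h₃ i).symm, ?_⟩
  rcases hin with ⟨h₁, h₂⟩ | ⟨h₁, h₂⟩ | ⟨h₁, h₂⟩
  exacts [.inl ⟨h₁.symm, h₂.symm⟩, .inr (.inl ⟨h₁.symm, h₂.symm⟩), .inr (.inr ⟨h₁.symm, h₂.symm⟩)]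

instance : Std.Symm (@Step n d) where
  symm _ _ := fun ⟨hP, hQ, x, y, z, hxy, hxz, hyz, h⟩ => ⟨hQ, hP, x, y, z, hxy, hxz, hyz, h.symm⟩

end Involution

theorem forall_existsUnique_adj_iff_eq_compl {V : Type*} {P : Fin 2 → SimpleGraph V} :
    (∀ u v, u ≠ v → ∃! i, (P i).Adj u v) ↔ P 1 = (P 0)ᶜ := by
  have key : ∀ p : Fin 2 → Prop, (∃! i, p i) ↔ (p 1 ↔ ¬ p 0) := fun p => by
    simp only [ExistsUnique, Fin.exists_fin_two, Fin.forall_fin_two, zero_ne_one, one_ne_zero,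
      imp_false]
    tauto
  simp only [key, SimpleGraph.ext_iff, funext_iff, eq_iff_iff, compl_adj]
  exact forall₂_congr fun u v => by by_cases huv : u = v <;> simp [huv]

theorem isCFP_two_iff {n : ℕ} {P : Fin 2 → SimpleGraph (Fin n)} :
    IsCFP P ↔ P 1 = (P 0)ᶜ ∧ (P 0).IsAcyclic ∧ (P 1).IsAcyclic := by
  rw [IsCFP, forall_existsUnique_adj_iff_eq_compl, Fin.forall_fin_two]

def k4Edge : Fin 6 → Sym2 (Fin 4) := ![s(0, 1), s(0, 2), s(0, 3), s(1, 2), s(1, 3), s(2, 3)]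

theorem exists_k4Edge_eq : ∀ {u v : Fin 4}, u ≠ v → ∃ i, k4Edge i = s(u, v) := by
  decide

theorem k4Edge_injective : Function.Injective k4Edge := by
  decide

theorem k4Edge_not_isDiag (i : Fin 6) : ¬ (k4Edge i).IsDiag := by
  revert i; decide

def k4Graph (b : Fin 6 → Bool) : SimpleGraph (Fin 4) :=
  fromEdgeSet {e | ∃ i, b i ∧ k4Edge i = e}

instance (b : Fin 6 → Bool) : DecidableRel (k4Graph b).Adj := fun u v =>
  inferInstanceAs (Decidable ((∃ i, b i ∧ k4Edge i = s(u, v)) ∧ u ≠ v))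

theorem k4Graph_adj_iff {b : Fin 6 → Bool} {i : Fin 6} {u v : Fin 4} (h : k4Edge i = s(u, v)) :
    (k4Graph b).Adj u v ↔ b i := by
  have huv : u ≠ v := fun huv => k4Edge_not_isDiag i (by simp [h, huv])
  simp only [k4Graph, fromEdgeSet_adj, Set.mem_ofPred_eq, ← h, k4Edge_injective.eq_iff,
    exists_eq_right, ne_eq, huv, not_false_eq_true, and_true]

theorem compl_k4Graph (b : Fin 6 → Bool) : (k4Graph b)ᶜ = k4Graph (!b ·) := by
  ext u v
  by_cases huv : u = v
  · simp [huv]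
  · obtain ⟨i, hi⟩ := exists_k4Edge_eq huv
    simp [compl_adj, huv, k4Graph_adj_iff hi]

theorem k4Graph_surjective : Function.Surjective k4Graph := by
  classical
  intro G
  refine ⟨fun i => decide (k4Edge i ∈ G.edgeSet), ?_⟩
  ext u v
  by_cases huv : u = v
  · simp [huv]
  · obtain ⟨i, hi⟩ := exists_k4Edge_eq huv
    simp [k4Graph_adj_iff hi, hi]

theorem k4Graph_injective : Function.Injective k4Graph := by
  intro b c h
  funext i
  obtain ⟨⟨u, v⟩, hi⟩ := Quot.exists_rep (k4Edge i)
  rw [Bool.eq_iff_iff, ← k4Graph_adj_iff hi.symm, ← k4Graph_adj_iff hi.symm, h]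

def k4Part (b : Fin 6 → Bool) : Fin 2 → SimpleGraph (Fin 4) :=
  fun i => k4Graph (if i = 0 then b else (!b ·))

instance (b : Fin 6 → Bool) (i : Fin 2) : DecidableRel (k4Part b i).Adj :=
  inferInstanceAs (DecidableRel (k4Graph _).Adj)

theorem k4Part_injective : Function.Injective k4Part :=
  fun _ _ h => k4Graph_injective (congrFun h 0)

theorem exists_eq_k4Part {P : Fin 2 → SimpleGraph (Fin 4)} (h : P 1 = (P 0)ᶜ) :
    ∃ b, P = k4Part b := by
  obtain ⟨b, hb⟩ := k4Graph_surjective (P 0)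
  refine ⟨b, funext fun i => ?_⟩
  fin_cases i
  · exact hb.symm
  · exact h.trans (hb ▸ compl_k4Graph b)

def k4Paths : List (Fin 6 → Bool) :=
  [![false, false, true, true, false, true], ![false, false, true, true, true, false],
   ![false, true, false, true, true, false], ![false, true, false, false, true, true],
   ![false, true, true, false, true, false], ![false, true, true, true, false, false],
   ![true, false, true, true, false, false], ![true, false, false, true, false, true],
   ![true, false, false, false, true, true], ![true, false, true, false, false, true],
   ![true, true, false, false, false, true], ![true, true, false, false, true, false]]

theorem isAcyclic_k4Graph_and_compl_iff (b : Fin 6 → Bool) :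
    ((k4Graph b).IsAcyclic ∧ (k4Graph b)ᶜ.IsAcyclic) ↔ b ∈ k4Paths := by
  revert b; decide +kernel

theorem isCFP_k4Part_iff {b : Fin 6 → Bool} : IsCFP (k4Part b) ↔ b ∈ k4Paths := by
  have hcompl : k4Part b 1 = (k4Part b 0)ᶜ := (compl_k4Graph b).symm
  rw [isCFP_two_iff, hcompl, ← isAcyclic_k4Graph_and_compl_iff]
  exact and_iff_right rfl

theorem isCFP_iff_mem_map_k4Part {P : Fin 2 → SimpleGraph (Fin 4)} :
    IsCFP P ↔ P ∈ k4Paths.map k4Part := by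
  rw [List.mem_map]
  constructor
  · intro hP
    obtain ⟨b, rfl⟩ := exists_eq_k4Part (isCFP_two_iff.1 hP).1
    exact ⟨b, isCFP_k4Part_iff.1 hP, rfl⟩
  · rintro ⟨b, hb, rfl⟩
    exact isCFP_k4Part_iff.2 hb

theorem isChain_step_map_k4Part : (k4Paths.map k4Part).IsChain Step := by
  have hflip : k4Paths.IsChain fun b c => ∃ x y z : Fin 4, x ≠ y ∧ x ≠ z ∧ y ≠ z ∧
      FlipCond x y z (k4Part b) (k4Part c) := by
    decide
  rw [List.isChain_map]
  exact hflip.imp_of_mem_imp fun b c hb hc h => ⟨isCFP_k4Part_iff.2 hb, isCFP_k4Part_iff.2 hc, h⟩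

/-- For `d = 2`: any two cycle-free `2`-partitions of `K_4` are involution equivalent, and
there are exactly `12` cycle-free `2`-partitions of `K_4`. -/
theorem d_two_case :
    (∀ P Q : Fin 2 → SimpleGraph (Fin 4), IsCFP P → IsCFP Q → InvEquiv P Q) ∧
    {P : Fin 2 → SimpleGraph (Fin 4) | IsCFP P}.ncard = 12 := by
  classical
  refine ⟨fun P Q hP hQ => isChain_step_map_k4Part.reflTransGen_of_mem
    (isCFP_iff_mem_map_k4Part.1 hP) (isCFP_iff_mem_map_k4Part.1 hQ), ?_⟩
  have hset : {P | IsCFP P} = ((k4Paths.map k4Part).toFinset : Set (Fin 2 → SimpleGraph (Fin 4))) :=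
    Set.ext fun P => by simp [isCFP_iff_mem_map_k4Part]
  have hnodup : (k4Paths.map k4Part).Nodup := (by decide : k4Paths.Nodup).map k4Part_injective
  rw [hset, Set.ncard_coe_finset, List.toFinset_card_of_nodup hnodup]
  rfl
end
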